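/- arXiv:2212.09412 — 3 statements merged into one kernel-verified Lean document; each statement's English description precedes it below -/
import Mathlib

section
/- Under the Setup, the degenerated (nearest-neighbor) model recovers the true token with probability tending to 1 in the joint limit β̄ → 0, d → ∞: for every δ > 0 there exist β̄₀ > 0 and d₀ ∈ ℕ such that for all β̄ ∈ (0, β̄₀) and all d ≥ d₀, the probability of the event { for every token index i ≠ y, ℓ(z_t, y) < ℓ(z_t, i) } is greater than 1 − δ; on this event the index y is the unique minimizer of i ↦ ℓ(z_t, i), so the degenerated model's output equals z₀. (Lemma 2.) -/
/-!
Since `log softmax` is `⟪z, e_i⟫` minus a term independent of `i`, `ℓ(z, i) - ℓ(z, y)` is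
`‖e_i‖² / d` plus `(1 + 2 / d)(⟪z, e_y⟫ - ⟪z, e_i⟫)` minus `‖e_y‖² / d`. For `z = z_t` with
`β̄ ≤ 3/4` the inner-product gap is at least `‖e_y‖² / 4` as soon as `⟪e_y, e_i⟫`, `⟪ε, e_y⟫` and
`⟪ε, e_i⟫` are at most `‖e_y‖² / 16`, and then `y` wins for `d ≥ 3`. Each of these inner products
and the fluctuation of `‖e_y‖²` around `σ_e² d` is a sum of `d` pairwise independent centred
terms, so by Chebyshev it is of order `√d ≪ σ_e² d` except on an event of probability `O(1/d)`;
a union bound over the `2V + 1` events finishes the proof.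
-/
open MeasureTheory ProbabilityTheory Finset

/-- The per-token loss `ℓ(z, i) = (1/d)·‖z − e_i‖² − log softmax_i(⟪z, e_·⟫)`,
where `e : Fin V → Fin d → ℝ` are the embeddings. -/
noncomputable def tokenLoss {V d : ℕ} (e : Fin V → Fin d → ℝ) (z : Fin d → ℝ) (i : Fin V) : ℝ :=
  (1 / (d : ℝ)) * ∑ j, (z j - e i j) ^ 2
    - Real.log (Real.exp (∑ j, z j * e i j) / ∑ k : Fin V, Real.exp (∑ j, z j * e k j))

/-- The noised embedding `z_t = √(1−β̄)·z₀ + √β̄·ε`. -/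
noncomputable def noised {d : ℕ} (βb : ℝ) (z0 ε : Fin d → ℝ) : Fin d → ℝ :=
  fun j => Real.sqrt (1 - βb) * z0 j + Real.sqrt βb * ε j

open Filter Matrix
open scoped NNReal ENNReal

section Loss

variable {V d : ℕ}

lemma tokenLoss_eq (e : Fin V → Fin d → ℝ) (z : Fin d → ℝ) (i : Fin V) :
    tokenLoss e z i =
      (z - e i) ⬝ᵥ (z - e i) / d - z ⬝ᵥ e i + Real.log (∑ k, Real.exp (z ⬝ᵥ e k)) := by
  have hpos : 0 < ∑ k, Real.exp (z ⬝ᵥ e k) := sum_pos (fun k _ => Real.exp_pos _) ⟨i, mem_univ i⟩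
  change _ - Real.log (Real.exp (z ⬝ᵥ e i) / ∑ k, Real.exp (z ⬝ᵥ e k)) = _
  rw [Real.log_div (Real.exp_pos _).ne' hpos.ne', Real.log_exp]
  simp only [dotProduct, Pi.sub_apply, sq]
  ring

lemma tokenLoss_lt_of_dotProduct_self_lt (e : Fin V → Fin d → ℝ) (z : Fin d → ℝ) {y i : Fin V}
    (h : e y ⬝ᵥ e y < (d + 2) * (z ⬝ᵥ e y - z ⬝ᵥ e i)) :
    tokenLoss e z y < tokenLoss e z i := by
  obtain rfl | hd := Nat.eq_zero_or_pos d
  · simp at h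
  have hd' : (0 : ℝ) < d := by exact_mod_cast hd
  have hdiff : d * (tokenLoss e z i - tokenLoss e z y) =
      e i ⬝ᵥ e i + ((d + 2) * (z ⬝ᵥ e y - z ⬝ᵥ e i) - e y ⬝ᵥ e y) := by
    simp only [tokenLoss_eq, sub_dotProduct, dotProduct_sub, dotProduct_comm (e y) z,
      dotProduct_comm (e i) z]
    field_simp
    ring
  have hii : 0 ≤ e i ⬝ᵥ e i := sum_nonneg fun j _ => mul_self_nonneg _
  nlinarith

lemma noised_eq_smul_add_smul (β : ℝ) (u w : Fin d → ℝ) :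
    noised β u w = √(1 - β) • u + √β • w :=
  rfl

lemma le_noised_dotProduct_sub {β : ℝ} (hβ : β ≤ 3 / 4) {u v w : Fin d → ℝ}
    (huv : |u ⬝ᵥ v| ≤ u ⬝ᵥ u / 16) (hwu : |w ⬝ᵥ u| ≤ u ⬝ᵥ u / 16)
    (hwv : |w ⬝ᵥ v| ≤ u ⬝ᵥ u / 16) :
    u ⬝ᵥ u / 4 ≤ noised β u w ⬝ᵥ u - noised β u w ⬝ᵥ v := by
  have ha : 1 / 2 ≤ √(1 - β) := (Real.le_sqrt (by norm_num) (by linarith)).2 (by linarith)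
  have hb : √β ≤ 1 := Real.sqrt_le_one.2 (by linarith)
  have hb0 : 0 ≤ √β := Real.sqrt_nonneg β
  simp only [noised_eq_smul_add_smul, add_dotProduct, smul_dotProduct, smul_eq_mul]
  obtain ⟨huv₁, huv₂⟩ := abs_le.1 huv
  obtain ⟨hwu₁, -⟩ := abs_le.1 hwu
  obtain ⟨-, hwv₂⟩ := abs_le.1 hwv
  nlinarith [mul_le_mul_of_nonneg_right ha (by linarith : 0 ≤ u ⬝ᵥ u - u ⬝ᵥ v),
    mul_le_mul_of_nonneg_left (by linarith : -(u ⬝ᵥ u / 8) ≤ w ⬝ᵥ u - w ⬝ᵥ v) hb0,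
    mul_le_mul_of_nonneg_right hb (by linarith : 0 ≤ u ⬝ᵥ u / 8)]

/-- `v` stands for `σ_e²`, so that `v d` is the typical size of `‖e_y‖²`. -/
def WellSeparated (v : ℝ) (e : Fin V → Fin d → ℝ) (y : Fin V) (w : Fin d → ℝ) : Prop :=
  |e y ⬝ᵥ e y - v * d| < v * d / 2 ∧ (∀ i, i ≠ y → |e y ⬝ᵥ e i| < v * d / 32) ∧
    ∀ k, |w ⬝ᵥ e k| < v * d / 32

lemma WellSeparated.tokenLoss_lt {v β : ℝ} {e : Fin V → Fin d → ℝ} {y : Fin V} {w : Fin d → ℝ}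
    (h : WellSeparated v e y w) (hv : 0 ≤ v) (hβ : β ≤ 3 / 4) (hd : 3 ≤ d)
    {i : Fin V} (hi : i ≠ y) :
    tokenLoss e (noised β (e y) w) y < tokenLoss e (noised β (e y) w) i := by
  obtain ⟨hy, hyi, hw⟩ := h
  have hvd : 0 ≤ v * d := by positivity
  have hy' := (abs_lt.1 hy).1
  have hgap := le_noised_dotProduct_sub hβ (u := e y) (v := e i) (w := w)
    (by linarith [hyi i hi]) (by linarith [hw y]) (by linarith [hw i])
  have hd' : (3 : ℝ) ≤ d := by exact_mod_cast hd
  apply tokenLoss_lt_of_dotProduct_self_lt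
  nlinarith

end Loss

namespace ProbabilityTheory

variable {Ω : Type*} [MeasurableSpace Ω] {P : Measure Ω}

lemma measure_le_abs_sum_sub_integral_le [IsFiniteMeasure P] {ι : Type*} [Fintype ι]
    {X : ι → Ω → ℝ} (hX : ∀ i, MemLp (X i) 2 P) (hindep : Pairwise fun i j => X i ⟂ᵢ[P] X j)
    {v t : ℝ} (hv : ∀ i, Var[X i; P] ≤ v) (ht : 0 < t) :
    P {ω | t ≤ |∑ i, (X i ω - P[X i])|} ≤ ENNReal.ofReal (Fintype.card ι * v / t ^ 2) := by
  have hvar : Var[∑ i, X i; P] ≤ Fintype.card ι * v := by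
    rw [IndepFun.variance_sum (fun i _ => hX i) fun i _ j _ hij => hindep hij]
    simpa using sum_le_sum fun i (_ : i ∈ univ) => hv i
  calc P {ω | t ≤ |∑ i, (X i ω - P[X i])|}
      = P {ω | t ≤ |(∑ i, X i) ω - P[∑ i, X i]|} := by
        simp only [Finset.sum_apply, sum_sub_distrib,
          integral_finsetSum _ fun i _ => (hX i).integrable one_le_two]
    _ ≤ ENNReal.ofReal (Var[∑ i, X i; P] / t ^ 2) :=
        meas_ge_le_variance_div_sq (memLp_finsetSum' _ fun i _ => hX i) ht
    _ ≤ _ := ENNReal.ofReal_le_ofReal (by gcongr)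

lemma measure_le_abs_sum_comp_sub_integral_le [IsFiniteMeasure P] {ι : Type*} [Fintype ι]
    {X : ι → Ω → ℝ} {μ : Measure ℝ} (hX : ∀ i, HasLaw (X i) μ P)
    (hindep : Pairwise fun i j => X i ⟂ᵢ[P] X j) {f : ℝ → ℝ} (hf : Measurable f)
    (hf2 : MemLp f 2 μ) {t : ℝ} (ht : 0 < t) :
    P {ω | t ≤ |∑ i, (f (X i ω) - ∫ x, f x ∂μ)|} ≤
      ENNReal.ofReal (Fintype.card ι * Var[f; μ] / t ^ 2) := by
  have hmean : ∀ i, ∫ ω, f (X i ω) ∂P = ∫ x, f x ∂μ := fun i =>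
    (hX i).integral_comp hf.aestronglyMeasurable
  have hvar : ∀ i, Var[f ∘ X i; P] = Var[f; μ] := fun i => by
    rw [← (hX i).map_eq, variance_map (by rw [(hX i).map_eq]; exact hf.aemeasurable)
      (hX i).aemeasurable]
  have := measure_le_abs_sum_sub_integral_le (X := fun i => f ∘ X i)
    (fun i => ((hX i).map_eq ▸ hf2).comp_of_map (hX i).aemeasurable)
    (fun i j hij => (hindep hij).comp hf hf) (fun i => (hvar i).le) ht
  simpa only [hmean, Function.comp_apply] using this

lemma IndepFun.memLp_two_mul {X Y : Ω → ℝ} (h : X ⟂ᵢ[P] Y) (hX : MemLp X 2 P)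
    (hY : MemLp Y 2 P) : MemLp (X * Y) 2 P := by
  refine (memLp_two_iff_integrable_sq (hX.1.mul hY.1)).2 ?_
  have hsq : (fun ω => X ω ^ 2) ⟂ᵢ[P] (fun ω => Y ω ^ 2) :=
    h.comp (measurable_id.pow_const 2) (measurable_id.pow_const 2)
  simp only [Pi.mul_apply, mul_pow]
  exact hsq.integrable_mul hX.integrable_sq hY.integrable_sq

lemma IndepFun.variance_mul_le [IsProbabilityMeasure P] {X Y : Ω → ℝ} (h : X ⟂ᵢ[P] Y)
    (hX : AEStronglyMeasurable X P) (hY : AEStronglyMeasurable Y P) :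
    Var[X * Y; P] ≤ (∫ ω, X ω ^ 2 ∂P) * ∫ ω, Y ω ^ 2 ∂P := by
  have hsq : (fun ω => X ω ^ 2) ⟂ᵢ[P] (fun ω => Y ω ^ 2) :=
    h.comp (measurable_id.pow_const 2) (measurable_id.pow_const 2)
  calc Var[X * Y; P] ≤ P[(X * Y) ^ 2] := variance_le_expectation_sq (hX.mul hY)
    _ = ∫ ω, X ω ^ 2 * Y ω ^ 2 ∂P := by simp only [Pi.pow_apply, Pi.mul_apply, mul_pow]
    _ = _ := hsq.integral_fun_mul_eq_mul_integral (hX.pow 2) (hY.pow 2)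

lemma measure_le_abs_sum_mul_le [IsProbabilityMeasure P] {ι κ : Type*} [Fintype κ]
    {F : ι → Ω → ℝ} (hF : iIndepFun F P) (hFm : ∀ i, Measurable (F i)) {p q : κ → ι}
    (hp : p.Injective) (hq : q.Injective) (hpq : ∀ j k, p j ≠ q k)
    (hp2 : ∀ j, MemLp (F (p j)) 2 P) (hq2 : ∀ j, MemLp (F (q j)) 2 P)
    (hmean : ∀ j, ∫ ω, F (p j) ω ∂P = 0) {a b t : ℝ} (ha : ∀ j, ∫ ω, F (p j) ω ^ 2 ∂P ≤ a)
    (hb : ∀ j, ∫ ω, F (q j) ω ^ 2 ∂P ≤ b) (ht : 0 < t) :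
    P {ω | t ≤ |∑ j, F (p j) ω * F (q j) ω|} ≤
      ENNReal.ofReal (Fintype.card κ * (a * b) / t ^ 2) := by
  have hpq' : ∀ j, F (p j) ⟂ᵢ[P] F (q j) := fun j => hF.indepFun (hpq j j)
  have hmean' : ∀ j, ∫ ω, F (p j) ω * F (q j) ω ∂P = 0 := fun j => by
    rw [(hpq' j).integral_fun_mul_eq_mul_integral (hp2 j).1 (hq2 j).1, hmean j, zero_mul]
  have hvar : ∀ j, Var[F (p j) * F (q j); P] ≤ a * b := fun j =>
    ((hpq' j).variance_mul_le (hp2 j).1 (hq2 j).1).trans <|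
      mul_le_mul (ha j) (hb j) (integral_nonneg fun _ => sq_nonneg _)
        ((integral_nonneg fun _ => sq_nonneg _).trans (ha j))
  have := measure_le_abs_sum_sub_integral_le (X := fun j => F (p j) * F (q j))
    (fun j => (hpq' j).memLp_two_mul (hp2 j) (hq2 j))
    (fun i j hij => hF.indepFun_mul_mul hFm _ _ _ _ (hp.ne hij) (hpq i j) (hpq j i).symm
      (hq.ne hij)) hvar ht
  simpa only [Pi.mul_apply, hmean', sub_zero] using this

lemma memLp_sq_gaussianReal (m : ℝ) (v : ℝ≥0) :
    MemLp (fun x : ℝ => x ^ 2) 2 (gaussianReal m v) := by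
  refine (memLp_two_iff_integrable_sq (by fun_prop)).2 ?_
  convert (memLp_id_gaussianReal 4).integrable_norm_pow (p := 4) (by norm_num) using 2 with x
  rw [id, Real.norm_eq_abs, ← pow_mul, pow_abs, abs_of_nonneg (by positivity)]

lemma integral_sq_gaussianReal (v : ℝ≥0) : ∫ x, x ^ 2 ∂gaussianReal 0 v = v := by
  have h := variance_eq_sub (memLp_id_gaussianReal (μ := 0) (v := v) 2)
  simp only [variance_id_gaussianReal, Pi.pow_apply, id, integral_id_gaussianReal] at h
  simpa using h.symm

namespace HasLaw

variable {X : Ω → ℝ} {v : ℝ≥0}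

lemma memLp_of_gaussianReal {m : ℝ} (hX : HasLaw X (gaussianReal m v) P) (p : ℝ≥0) :
    MemLp X p P :=
  (hX.map_eq ▸ memLp_id_gaussianReal p).comp_of_map hX.aemeasurable

lemma integral_eq_zero_of_gaussianReal (hX : HasLaw X (gaussianReal 0 v) P) : ∫ ω, X ω ∂P = 0 := by
  rw [hX.integral_eq, integral_id_gaussianReal]

lemma integral_sq_of_gaussianReal (hX : HasLaw X (gaussianReal 0 v) P) :
    ∫ ω, X ω ^ 2 ∂P = v := by
  rw [← integral_sq_gaussianReal v, ← hX.integral_comp (by fun_prop)]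
  rfl

end HasLaw

end ProbabilityTheory

lemma ofReal_one_sub_lt_measure_of_measure_compl_le {Ω : Type*} [MeasurableSpace Ω]
    {P : Measure Ω} [IsProbabilityMeasure P] {s : Set Ω} {q δ : ℝ} (hq : 0 ≤ q) (hqδ : q < δ)
    (hq1 : q < 1) (h : P sᶜ ≤ ENNReal.ofReal q) : ENNReal.ofReal (1 - δ) < P s := by
  have hcover : 1 ≤ P s + P sᶜ := by
    simpa [Set.union_compl_self] using measure_union_le (μ := P) s sᶜ
  calc ENNReal.ofReal (1 - δ) < ENNReal.ofReal (1 - q) :=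
        ENNReal.ofReal_lt_ofReal_iff'.2 ⟨by linarith, by linarith⟩
    _ = 1 - ENNReal.ofReal q := by rw [ENNReal.ofReal_sub _ hq, ENNReal.ofReal_one]
    _ ≤ 1 - P sᶜ := tsub_le_tsub_left h 1
    _ ≤ P s := tsub_le_iff_right.2 hcover

section Embeddings

variable {Ω : Type*} [MeasurableSpace Ω] {P : Measure Ω} {V d : ℕ}
  {e : Fin V → Ω → Fin d → ℝ} {ε : Ω → Fin d → ℝ} {v : ℝ≥0}

structure GaussianEmbeddingModel (P : Measure Ω) (v : ℝ≥0) (e : Fin V → Ω → Fin d → ℝ)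
    (ε : Ω → Fin d → ℝ) : Prop where
  measurable_embedding : ∀ k j, Measurable fun ω => e k ω j
  measurable_noise : ∀ j, Measurable fun ω => ε ω j
  hasLaw_embedding : ∀ k j, HasLaw (fun ω => e k ω j) (gaussianReal 0 v) P
  hasLaw_noise : ∀ j, HasLaw (fun ω => ε ω j) (gaussianReal 0 1) P
  iIndepFun : iIndepFun (Sum.elim (fun (p : Fin V × Fin d) (ω : Ω) => e p.1 ω p.2)
    (fun (j : Fin d) (ω : Ω) => ε ω j)) P

/-- `d` times the Chebyshev bounds for `‖e_y‖²` to deviate from `v d` by `v d / 2`, and for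
`⟪e_y, e_i⟫` and `⟪ε, e_k⟫` to exceed `v d / 32`. -/
noncomputable def separationConst (v : ℝ≥0) : ℝ :=
  4 * Var[fun x => x ^ 2; gaussianReal 0 v] / v ^ 2 + 1024 + 1024 / v

lemma separationConst_nonneg (v : ℝ≥0) : 0 ≤ separationConst v := by
  have := variance_nonneg (fun x : ℝ => x ^ 2) (gaussianReal 0 v)
  unfold separationConst
  positivity

namespace GaussianEmbeddingModel

lemma measurable_coordinate (h : GaussianEmbeddingModel P v e ε) :
    ∀ i, Measurable (Sum.elim (fun (p : Fin V × Fin d) (ω : Ω) => e p.1 ω p.2)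
      (fun (j : Fin d) (ω : Ω) => ε ω j) i)
  | .inl (k, j) => h.measurable_embedding k j
  | .inr j => h.measurable_noise j

variable [IsProbabilityMeasure P]

lemma measure_abs_dotProduct_self_sub_ge_le (h : GaussianEmbeddingModel P v e ε) (hv : v ≠ 0)
    (hd : 0 < d) (y : Fin V) :
    P {ω | v * d / 2 ≤ |e y ω ⬝ᵥ e y ω - v * d|} ≤ ENNReal.ofReal (separationConst v / d) := by
  have hv' : (0 : ℝ) < v := by positivity
  have hd' : (0 : ℝ) < d := by exact_mod_cast hd
  have hcheb := measure_le_abs_sum_comp_sub_integral_le (fun j => h.hasLaw_embedding y j)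
    (fun i j hij => h.iIndepFun.indepFun (i := .inl (y, i)) (j := .inl (y, j)) (by simpa using hij))
    (f := fun x => x ^ 2) (by fun_prop) (memLp_sq_gaussianReal 0 v) (t := v * d / 2) (by positivity)
  have hsum : ∀ ω, ∑ j, (e y ω j ^ 2 - ∫ x, x ^ 2 ∂gaussianReal 0 v) = e y ω ⬝ᵥ e y ω - v * d :=
    fun ω => by simp [integral_sq_gaussianReal v, dotProduct, sum_sub_distrib, ← sq, mul_comm]
  simp only [hsum, Fintype.card_fin] at hcheb
  refine hcheb.trans (ENNReal.ofReal_le_ofReal ?_)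
  have : 0 ≤ 1024 / (v : ℝ) := by positivity
  calc _ = 4 * Var[fun x => x ^ 2; gaussianReal 0 v] / v ^ 2 / d := by field_simp; ring
    _ ≤ separationConst v / d := by unfold separationConst; gcongr; linarith

lemma measure_abs_dotProduct_ge_le (h : GaussianEmbeddingModel P v e ε) (hv : v ≠ 0)
    (hd : 0 < d) {y i : Fin V} (hi : i ≠ y) :
    P {ω | v * d / 32 ≤ |e y ω ⬝ᵥ e i ω|} ≤ ENNReal.ofReal (separationConst v / d) := by
  have hv' : (0 : ℝ) < v := by positivity
  have hd' : (0 : ℝ) < d := by exact_mod_cast hd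
  have hcheb := measure_le_abs_sum_mul_le h.iIndepFun h.measurable_coordinate
    (p := fun j => .inl (y, j)) (q := fun j => .inl (i, j)) (fun a b h => by simpa using h)
    (fun a b h => by simpa using h) (fun j k => by simp [Ne.symm hi])
    (fun j => (h.hasLaw_embedding y j).memLp_of_gaussianReal 2)
    (fun j => (h.hasLaw_embedding i j).memLp_of_gaussianReal 2)
    (fun j => (h.hasLaw_embedding y j).integral_eq_zero_of_gaussianReal)
    (fun j => (h.hasLaw_embedding y j).integral_sq_of_gaussianReal.le)
    (fun j => (h.hasLaw_embedding i j).integral_sq_of_gaussianReal.le) (t := v * d / 32)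
    (by positivity)
  rw [Fintype.card_fin] at hcheb
  refine hcheb.trans (ENNReal.ofReal_le_ofReal ?_)
  have : 0 ≤ 4 * Var[fun x => x ^ 2; gaussianReal 0 v] / v ^ 2 :=
    div_nonneg (mul_nonneg (by norm_num) (variance_nonneg _ _)) (by positivity)
  have : 0 ≤ 1024 / (v : ℝ) := by positivity
  calc _ = (1024 : ℝ) / d := by field_simp; norm_num
    _ ≤ separationConst v / d := by unfold separationConst; gcongr; linarith

lemma measure_abs_noise_dotProduct_ge_le (h : GaussianEmbeddingModel P v e ε) (hv : v ≠ 0)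
    (hd : 0 < d) (k : Fin V) :
    P {ω | v * d / 32 ≤ |ε ω ⬝ᵥ e k ω|} ≤ ENNReal.ofReal (separationConst v / d) := by
  have hv' : (0 : ℝ) < v := by positivity
  have hd' : (0 : ℝ) < d := by exact_mod_cast hd
  have hcheb := measure_le_abs_sum_mul_le h.iIndepFun h.measurable_coordinate
    (p := fun j => .inr j) (q := fun j => .inl (k, j)) (fun a b h => by simpa using h)
    (fun a b h => by simpa using h) (fun j k => by simp)
    (fun j => (h.hasLaw_noise j).memLp_of_gaussianReal 2)
    (fun j => (h.hasLaw_embedding k j).memLp_of_gaussianReal 2)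
    (fun j => (h.hasLaw_noise j).integral_eq_zero_of_gaussianReal)
    (fun j => (h.hasLaw_noise j).integral_sq_of_gaussianReal.le)
    (fun j => (h.hasLaw_embedding k j).integral_sq_of_gaussianReal.le) (t := v * d / 32)
    (by positivity)
  rw [Fintype.card_fin] at hcheb
  refine hcheb.trans (ENNReal.ofReal_le_ofReal ?_)
  have : 0 ≤ 4 * Var[fun x => x ^ 2; gaussianReal 0 v] / v ^ 2 :=
    div_nonneg (mul_nonneg (by norm_num) (variance_nonneg _ _)) (by positivity)
  calc _ = (1024 : ℝ) / v / d := by field_simp; norm_num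
    _ ≤ separationConst v / d := by unfold separationConst; gcongr; linarith

lemma measure_not_wellSeparated_le (h : GaussianEmbeddingModel P v e ε) (hv : v ≠ 0)
    (hd : 0 < d) (y : Fin V) :
    P {ω | ¬ WellSeparated v (fun k => e k ω) y (ε ω)} ≤
      ENNReal.ofReal ((2 * V + 1) * separationConst v / d) := by
  set x := ENNReal.ofReal (separationConst v / d)
  have hsub : {ω | ¬ WellSeparated v (fun k => e k ω) y (ε ω)} ⊆
      {ω | v * d / 2 ≤ |e y ω ⬝ᵥ e y ω - v * d|} ∪
        (⋃ i ∈ univ.erase y, {ω | v * d / 32 ≤ |e y ω ⬝ᵥ e i ω|}) ∪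
        ⋃ k, {ω | v * d / 32 ≤ |ε ω ⬝ᵥ e k ω|} := by
    intro ω hω
    by_contra hgood
    simp only [Set.mem_union, Set.mem_iUnion, Set.mem_ofPred_eq, mem_erase, mem_univ,
      and_true, exists_prop, not_or, not_exists, not_and, not_le] at hgood
    exact hω ⟨hgood.1.1, hgood.1.2, hgood.2⟩
  have hcast : ENNReal.ofReal (2 * V + 1) = 2 * V + 1 := by
    exact_mod_cast ENNReal.ofReal_natCast (2 * V + 1)
  calc P {ω | ¬ WellSeparated v (fun k => e k ω) y (ε ω)}
      ≤ P {ω | v * d / 2 ≤ |e y ω ⬝ᵥ e y ω - v * d|} +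
          ∑ i ∈ univ.erase y, P {ω | v * d / 32 ≤ |e y ω ⬝ᵥ e i ω|} +
          ∑ k, P {ω | v * d / 32 ≤ |ε ω ⬝ᵥ e k ω|} :=
        (measure_mono hsub).trans <| (measure_union_le _ _).trans <|
          add_le_add ((measure_union_le _ _).trans (add_le_add le_rfl
            (measure_biUnion_finset_le _ _))) (measure_iUnion_fintype_le _ _)
    _ ≤ x + ∑ _i ∈ univ.erase y, x + ∑ _k : Fin V, x := by
        gcongr with i hi k
        exacts [h.measure_abs_dotProduct_self_sub_ge_le hv hd y,
          h.measure_abs_dotProduct_ge_le hv hd (ne_of_mem_erase hi),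
          h.measure_abs_noise_dotProduct_ge_le hv hd k]
    _ ≤ x + ∑ _i : Fin V, x + ∑ _k : Fin V, x := by
        gcongr
        exact erase_subset y univ
    _ = ENNReal.ofReal ((2 * V + 1) * separationConst v / d) := by
        rw [mul_div_assoc, ENNReal.ofReal_mul (by positivity), hcast]
        simp only [sum_const, card_univ, Fintype.card_fin, nsmul_eq_mul]
        ring

end GaussianEmbeddingModel

end Embeddings

theorem degenerated_model_recovers_true_token_general
    (σe : ℝ) (hσe : 0 < σe) (V : ℕ) (y : Fin V)
    (δ : ℝ) (hδ : 0 < δ) :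
    ∃ βb₀ : ℝ, 0 < βb₀ ∧ ∃ d₀ : ℕ,
      ∀ (βb : ℝ), 0 < βb → βb < βb₀ → βb < 1 →
      ∀ (d : ℕ), d₀ ≤ d →
      ∀ (Ω : Type) (_ : MeasurableSpace Ω) (P : Measure Ω), IsProbabilityMeasure P →
      ∀ (e : Fin V → Ω → Fin d → ℝ) (ε : Ω → Fin d → ℝ),
        (∀ k j, Measurable fun ω => e k ω j) →
        (∀ j, Measurable fun ω => ε ω j) →
        (∀ k j, P.map (fun ω => e k ω j) = gaussianReal 0 (Real.toNNReal (σe ^ 2))) →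
        (∀ j, P.map (fun ω => ε ω j) = gaussianReal 0 1) →
        iIndepFun
          (Sum.elim (fun (p : Fin V × Fin d) (ω : Ω) => e p.1 ω p.2)
            (fun (j : Fin d) (ω : Ω) => ε ω j)) P →
        ENNReal.ofReal (1 - δ) <
          P {ω | ∀ i : Fin V, i ≠ y →
              tokenLoss (fun k => e k ω) (noised βb (e y ω) (ε ω)) y <
                tokenLoss (fun k => e k ω) (noised βb (e y ω) (ε ω)) i} := by
  set v := (σe ^ 2).toNNReal
  have hv : v ≠ 0 := by simp [v, hσe.ne']
  set C := (2 * V + 1) * separationConst v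
  have hC : 0 ≤ C := mul_nonneg (by positivity) (separationConst_nonneg v)
  obtain ⟨d₀, hd₀⟩ := eventually_atTop.1 <|
    ((tendsto_const_div_atTop_nhds_zero_nat C).eventually (gt_mem_nhds (lt_min hδ one_pos))).and
      (eventually_ge_atTop 3)
  refine ⟨3 / 4, by norm_num, d₀, fun βb _ hβ _ d hd Ω _ P _ e ε he hε hle hlε hind => ?_⟩
  obtain ⟨hCd, hd3⟩ := hd₀ d hd
  have hmodel : GaussianEmbeddingModel P v e ε :=
    ⟨he, hε, fun k j => ⟨(he k j).aemeasurable, hle k j⟩, fun j => ⟨(hε j).aemeasurable, hlε j⟩,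
      hind⟩
  refine ofReal_one_sub_lt_measure_of_measure_compl_le (by positivity)
    (hCd.trans_le (min_le_left _ _)) (hCd.trans_le (min_le_right _ _)) <|
    (measure_mono ?_).trans <| hmodel.measure_not_wellSeparated_le hv (by omega) y
  intro ω hω hsep
  exact hω fun i hi => hsep.tokenLoss_lt (by positivity) hβ.le hd3 hi

/-- **Lemma 2**: the degenerated (nearest-neighbor) model recovers the true token with
probability tending to `1` in the joint limit `β̄ → 0`, `d → ∞`: with probability greater
than `1 − δ`, for every token index `i ≠ y` we have `ℓ(z_t, y) < ℓ(z_t, i)`, so that `y` is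
the unique minimizer of `i ↦ ℓ(z_t, i)` and the degenerated model's output equals `z₀`. -/
theorem degenerated_model_recovers_true_token
    (σe : ℝ) (hσe : 0 < σe) (V : ℕ) (hV : 2 ≤ V) (y : Fin V)
    (δ : ℝ) (hδ : 0 < δ) :
    ∃ βb₀ : ℝ, 0 < βb₀ ∧ ∃ d₀ : ℕ,
      ∀ (βb : ℝ), 0 < βb → βb < βb₀ → βb < 1 →
      ∀ (d : ℕ), d₀ ≤ d →
      ∀ (Ω : Type) (_ : MeasurableSpace Ω) (P : Measure Ω), IsProbabilityMeasure P →
      ∀ (e : Fin V → Ω → Fin d → ℝ) (ε : Ω → Fin d → ℝ),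
        (∀ k j, Measurable fun ω => e k ω j) →
        (∀ j, Measurable fun ω => ε ω j) →
        (∀ k j, P.map (fun ω => e k ω j) = gaussianReal 0 (Real.toNNReal (σe ^ 2))) →
        (∀ j, P.map (fun ω => ε ω j) = gaussianReal 0 1) →
        iIndepFun
          (Sum.elim (fun (p : Fin V × Fin d) (ω : Ω) => e p.1 ω p.2)
            (fun (j : Fin d) (ω : Ω) => ε ω j)) P →
        ENNReal.ofReal (1 - δ) <
          P {ω | ∀ i : Fin V, i ≠ y →
              tokenLoss (fun k => e k ω) (noised βb (e y ω) (ε ω)) y <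
                tokenLoss (fun k => e k ω) (noised βb (e y ω) (ε ω)) i} :=
  degenerated_model_recovers_true_token_general σe hσe V y δ hδ
end

section
/- Under the Setup, for every token index i ≠ y, the quantity g = √(1−β̄)·(⟪z₀, e_i⟫/d) + √β̄·(⟪ε, e_i⟫/d) − √(1−β̄)·(⟪z₀, z₀⟫/d) − √β̄·(⟪ε, z₀⟫/d) converges in probability to −σ_e² in the joint limit β̄ → 0, d → ∞: for every η > 0 and δ > 0 there exist β̄₀ > 0 and d₀ ∈ ℕ such that for all β̄ ∈ (0, β̄₀) and all d ≥ d₀, the probability that |g + σ_e²| < η is greater than 1 − δ. (Limit of g(z₀, ε, e_i, z₀) in the proof of Lemma 1.) -/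
open MeasureTheory ProbabilityTheory Finset

/-- Euclidean inner product on `ℝ^d` (as functions `Fin d → ℝ`). -/
noncomputable def edot {d : ℕ} (u v : Fin d → ℝ) : ℝ := ∑ j, u j * v j

/-!
The score splits as `√(1-β̄)·(⟪z₀, eᵢ⟫ - ⟪z₀, z₀⟫)/d + √β̄·(⟪ε, eᵢ⟫ - ⟪ε, z₀⟫)/d`. Each of the four
normalised inner products is the average of `d` independent products of Gaussian coordinates, so by
Chebyshev's inequality it lies within `t` of its mean (`σ_e²` for `⟪z₀, z₀⟫/d`, `0` for the others)
outside an event of probability `O(1/(d t²))`. Off these four events the score is within `5t` of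
`-σ_e²` once `β̄ σ_e² ≤ t`, because `1 - √(1-β̄) ≤ β̄`.
-/

open scoped NNReal ENNReal

instance ENNReal.holderTriple_four_four_two : ENNReal.HolderTriple 4 4 2 where
  inv_add_inv_eq_inv := by
    rw [show (4 : ℝ≥0∞) = 2 * 2 by norm_num, ENNReal.mul_inv (by simp) (by simp), ← add_mul,
      ENNReal.inv_two_add_inv_two, one_mul]

theorem meas_ge_abs_sum_div_sub_le {Ω : Type*} [MeasurableSpace Ω] {P : Measure Ω}
    [IsFiniteMeasure P] {d : ℕ} (hd : 0 < d) {W : Fin d → Ω → ℝ} (hW : ∀ j, MemLp (W j) 2 P)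
    (hindep : Pairwise fun j k => IndepFun (W j) (W k) P) {m M t : ℝ} (ht : 0 < t)
    (hmean : ∀ j, ∫ ω, W j ω ∂P = m) (hvar : ∀ j, Var[W j; P] ≤ M) :
    P {ω | t ≤ |(∑ j, W j ω) / d - m|} ≤ ENNReal.ofReal (M / (d * t ^ 2)) := by
  have hd' : (0 : ℝ) < d := by exact_mod_cast hd
  have hsum : MemLp (∑ j, W j) 2 P := memLp_finsetSum' _ fun j _ => hW j
  have hsum_mean : ∫ ω, (∑ j, W j) ω ∂P = d * m := by
    simp only [Finset.sum_apply]
    rw [integral_finsetSum _ fun j _ => (hW j).integrable one_le_two]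
    simp [hmean]
  have hsum_var : Var[∑ j, W j; P] ≤ d * M := by
    rw [IndepFun.variance_sum (fun j _ => hW j) fun j _ k _ hjk => hindep hjk]
    simpa using Finset.sum_le_sum fun j (_ : j ∈ univ) => hvar j
  have hset : {ω | t ≤ |(∑ j, W j ω) / d - m|}
      = {ω | d * t ≤ |(∑ j, W j) ω - ∫ ω, (∑ j, W j) ω ∂P|} := by
    ext ω
    rw [Set.mem_ofPred_eq, Set.mem_ofPred_eq, hsum_mean, Finset.sum_apply,
      show (∑ j, W j ω) / d - m = ((∑ j, W j ω) - d * m) / d by field_simp,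
      abs_div, abs_of_pos hd', le_div_iff₀ hd', mul_comm]
  calc P {ω | t ≤ |(∑ j, W j ω) / d - m|}
      ≤ ENNReal.ofReal (Var[∑ j, W j; P] / (d * t) ^ 2) :=
        hset ▸ meas_ge_le_variance_div_sq hsum (by positivity)
    _ ≤ ENNReal.ofReal (M / (d * t ^ 2)) := by
        refine ENNReal.ofReal_le_ofReal ?_
        calc Var[∑ j, W j; P] / (d * t) ^ 2 ≤ d * M / (d * t) ^ 2 := by gcongr
          _ = M / (d * t ^ 2) := by field_simp

lemma integral_sq_gaussianReal (v : ℝ≥0) : ∫ x, x ^ 2 ∂gaussianReal 0 v = v := by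
  have h := variance_eq_sub (memLp_id_gaussianReal (μ := 0) (v := v) 2)
  simp only [variance_id_gaussianReal, Pi.pow_apply, id_eq, integral_id_gaussianReal] at h
  linarith

section GaussianCoordinates

variable {Ω : Type*} [MeasurableSpace Ω] {P : Measure Ω} {d : ℕ} {v : ℝ≥0}

lemma ProbabilityTheory.HasLaw.integral_eq_zero_of_gaussianReal_s8 {X : Ω → ℝ}
    (hX : HasLaw X (gaussianReal 0 v) P) : ∫ ω, X ω ∂P = 0 := by
  rw [hX.integral_eq, integral_id_gaussianReal]

lemma ProbabilityTheory.HasLaw.integral_sq_of_gaussianReal_s8 {X : Ω → ℝ}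
    (hX : HasLaw X (gaussianReal 0 v) P) : ∫ ω, X ω ^ 2 ∂P = v :=
  (hX.integral_comp (f := fun x => x ^ 2) (by fun_prop)).trans (integral_sq_gaussianReal v)

theorem meas_ge_abs_edot_div_le [IsProbabilityMeasure P] (hd : 0 < d) {U X : Ω → Fin d → ℝ}
    {vU vX : ℝ≥0} (hU : ∀ j, HasLaw (fun ω => U ω j) (gaussianReal 0 vU) P)
    (hX : ∀ j, HasLaw (fun ω => X ω j) (gaussianReal 0 vX) P)
    (hind : iIndepFun (Sum.elim (fun j ω => U ω j) (fun j ω => X ω j)) P) {t : ℝ} (ht : 0 < t) :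
    P {ω | t ≤ |edot (U ω) (X ω) / d|} ≤ ENNReal.ofReal (vU * vX / (d * t ^ 2)) := by
  have hUX j : IndepFun (fun ω => U ω j) (fun ω => X ω j) P := hind.indepFun Sum.inl_ne_inr
  have hmemLp j : MemLp (fun ω => U ω j * X ω j) 2 P :=
    ((hX j).hasGaussianLaw.memLp (p := 4) (by simp)).mul
      ((hU j).hasGaussianLaw.memLp (p := 4) (by simp))
  have hmean j : ∫ ω, U ω j * X ω j ∂P = 0 := by
    rw [(hUX j).integral_fun_mul_eq_mul_integral (hU j).aemeasurable.aestronglyMeasurable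
      (hX j).aemeasurable.aestronglyMeasurable, (hU j).integral_eq_zero_of_gaussianReal_s8, zero_mul]
  have hvar j : Var[fun ω => U ω j * X ω j; P] ≤ vU * vX := by
    have hsq : IndepFun (fun ω => U ω j ^ 2) (fun ω => X ω j ^ 2) P :=
      (hUX j).comp (measurable_id.pow_const 2) (measurable_id.pow_const 2)
    calc Var[fun ω => U ω j * X ω j; P] ≤ ∫ ω, U ω j ^ 2 * X ω j ^ 2 ∂P := by
          simpa [mul_pow] using variance_le_expectation_sq (hmemLp j).aestronglyMeasurable
      _ = vU * vX := by
          rw [hsq.integral_fun_mul_eq_mul_integral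
            ((hU j).aemeasurable.pow_const 2).aestronglyMeasurable
            ((hX j).aemeasurable.pow_const 2).aestronglyMeasurable,
            (hU j).integral_sq_of_gaussianReal_s8, (hX j).integral_sq_of_gaussianReal_s8]
  have hpair : Pairwise fun j k =>
      IndepFun (fun ω => U ω j * X ω j) (fun ω => U ω k * X ω k) P := fun j k hjk =>
    hind.indepFun_mul_mul₀ (by rintro (a | a); exacts [(hU a).aemeasurable, (hX a).aemeasurable])
      (.inl j) (.inr j) (.inl k) (.inr k) (by simpa using hjk) Sum.inl_ne_inr Sum.inr_ne_inl
      (by simpa using hjk)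
  simpa [edot] using meas_ge_abs_sum_div_sub_le hd hmemLp hpair ht hmean hvar

theorem meas_ge_abs_edot_self_div_sub_le [IsProbabilityMeasure P] (hd : 0 < d)
    {X : Ω → Fin d → ℝ} (hX : ∀ j, HasLaw (fun ω => X ω j) (gaussianReal 0 v) P)
    (hind : iIndepFun (fun j ω => X ω j) P) {t : ℝ} (ht : 0 < t) :
    P {ω | t ≤ |edot (X ω) (X ω) / d - v|}
      ≤ ENNReal.ofReal (Var[fun x => x ^ 2; gaussianReal 0 v] / (d * t ^ 2)) := by
  have hsq j : (fun ω => X ω j * X ω j) = (fun x => x ^ 2) ∘ fun ω => X ω j := by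
    ext ω; simp [sq]
  have hmemLp j : MemLp (fun ω => X ω j * X ω j) 2 P :=
    have h4 := (hX j).hasGaussianLaw.memLp (p := 4) (by simp)
    h4.mul h4
  have hmean j : ∫ ω, X ω j * X ω j ∂P = v := by
    simpa [sq] using (hX j).integral_sq_of_gaussianReal_s8
  have hvar j : Var[fun ω => X ω j * X ω j; P] = Var[fun x => x ^ 2; gaussianReal 0 v] := by
    rw [hsq, ← variance_map (by fun_prop) (hX j).aemeasurable, (hX j).map_eq]
  have hpair : Pairwise fun j k =>
      IndepFun (fun ω => X ω j * X ω j) (fun ω => X ω k * X ω k) P := fun j k hjk => by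
    dsimp only
    rw [hsq, hsq]
    exact (hind.indepFun hjk).comp (by fun_prop) (by fun_prop)
  exact meas_ge_abs_sum_div_sub_le hd hmemLp hpair ht hmean fun j => (hvar j).le

end GaussianCoordinates

lemma one_sub_sqrt_one_sub_le {β : ℝ} (hβ0 : 0 ≤ β) (hβ1 : β ≤ 1) : 1 - √(1 - β) ≤ β := by
  have h := Real.sqrt_le_sqrt (show (1 - β) ^ 2 ≤ 1 - β by nlinarith)
  rw [Real.sqrt_sq (by linarith)] at h
  linarith

lemma abs_sqrt_mix_add_lt {β s t A B C D : ℝ} (hβ0 : 0 ≤ β) (hβ1 : β ≤ 1) (hs : 0 ≤ s)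
    (hβs : β * s ≤ t) (hA : |A| < t) (hB : |B| < t) (hC : |C - s| < t) (hD : |D| < t) :
    |√(1 - β) * A + √β * B - √(1 - β) * C - √β * D + s| < 5 * t := by
  have hcontract {c x : ℝ} (hc0 : 0 ≤ c) (hc1 : c ≤ 1) (hx : |x| < t) : |c * x| < t := by
    rw [abs_mul, abs_of_nonneg hc0]
    exact (mul_le_of_le_one_left (abs_nonneg x) hc1).trans_lt hx
  have ha1 : √(1 - β) ≤ 1 := Real.sqrt_le_one.mpr (by linarith)
  have hb1 : √β ≤ 1 := Real.sqrt_le_one.mpr hβ1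
  have hA' := abs_lt.mp (hcontract (Real.sqrt_nonneg _) ha1 hA)
  have hB' := abs_lt.mp (hcontract (Real.sqrt_nonneg _) hb1 hB)
  have hC' := abs_lt.mp (hcontract (Real.sqrt_nonneg _) ha1 hC)
  have hD' := abs_lt.mp (hcontract (Real.sqrt_nonneg _) hb1 hD)
  have hdrift : 0 ≤ (1 - √(1 - β)) * s ∧ (1 - √(1 - β)) * s ≤ t :=
    ⟨mul_nonneg (by linarith) hs,
      (mul_le_mul_of_nonneg_right (one_sub_sqrt_one_sub_le hβ0 hβ1) hs).trans hβs⟩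
  have hsplit : √(1 - β) * A + √β * B - √(1 - β) * C - √β * D + s
      = √(1 - β) * A + √β * B - √(1 - β) * (C - s) - √β * D + (1 - √(1 - β)) * s := by ring
  rw [hsplit, abs_lt]
  constructor <;> linarith [hA'.1, hA'.2, hB'.1, hB'.2, hC'.1, hC'.2, hD'.1, hD'.2]

lemma ofReal_one_sub_lt_of_measure_compl_lt {Ω : Type*} [MeasurableSpace Ω] {P : Measure Ω}
    [IsProbabilityMeasure P] {s : Set Ω} {δ : ℝ} (h : P sᶜ < ENNReal.ofReal (min δ 1)) :
    ENNReal.ofReal (1 - δ) < P s := by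
  have hδ : 0 < min δ 1 := ENNReal.ofReal_pos.mp (pos_of_gt h)
  calc ENNReal.ofReal (1 - δ) ≤ ENNReal.ofReal (1 - min δ 1) :=
        ENNReal.ofReal_le_ofReal (by linarith [min_le_left δ 1])
    _ = 1 - ENNReal.ofReal (min δ 1) := by rw [ENNReal.ofReal_sub _ hδ.le, ENNReal.ofReal_one]
    _ < P s := by
        refine ENNReal.sub_lt_of_lt_add (ENNReal.ofReal_le_one.mpr (min_le_right δ 1)) ?_
        calc 1 = P Set.univ := measure_univ.symm
          _ ≤ P s + P sᶜ := measure_univ_le_add_compl s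
          _ < P s + ENNReal.ofReal (min δ 1) := ENNReal.add_lt_add_left (measure_ne_top P s) h

lemma ProbabilityTheory.iIndepFun.sumElim_precomp {Ω ι κ κ' β : Type*} [MeasurableSpace Ω]
    [MeasurableSpace β] {P : Measure Ω} {f : ι → Ω → β} (h : iIndepFun f P) {a : κ → ι}
    {b : κ' → ι} (hab : Function.Injective (Sum.elim a b)) :
    iIndepFun (Sum.elim (fun k => f (a k)) fun k => f (b k)) P := by
  convert h.precomp hab using 1
  funext k
  cases k <;> rfl

/-- `g(z₀, ε, eᵢ, z₀) = ⟪z_β, eᵢ - z₀⟫ / d` of the paper, for the noised embedding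
`z_β = √(1-β) z₀ + √β ε`. -/
noncomputable def scoreGap {d : ℕ} (β : ℝ) (z₀ ε eᵢ : Fin d → ℝ) : ℝ :=
  √(1 - β) * (edot z₀ eᵢ / d) + √β * (edot ε eᵢ / d) - √(1 - β) * (edot z₀ z₀ / d)
    - √β * (edot ε z₀ / d)

theorem meas_ge_abs_scoreGap_add_le {Ω : Type*} [MeasurableSpace Ω] {P : Measure Ω}
    [IsProbabilityMeasure P] {V d : ℕ} (hd : 0 < d) {e : Fin V → Ω → Fin d → ℝ}
    {ε : Ω → Fin d → ℝ} {v : ℝ≥0} (he : ∀ k j, HasLaw (fun ω => e k ω j) (gaussianReal 0 v) P)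
    (hε : ∀ j, HasLaw (fun ω => ε ω j) (gaussianReal 0 1) P)
    (hind : iIndepFun (Sum.elim (fun (p : Fin V × Fin d) ω => e p.1 ω p.2) fun j ω => ε ω j) P)
    {y i : Fin V} (hi : i ≠ y) {β t : ℝ} (hβ0 : 0 ≤ β) (hβ1 : β ≤ 1) (hβv : β * v ≤ t)
    (ht : 0 < t) :
    P {ω | 5 * t ≤ |scoreGap β (e y ω) (ε ω) (e i ω) + v|}
      ≤ ENNReal.ofReal
          ((v ^ 2 + 2 * v + Var[fun x => x ^ 2; gaussianReal 0 v]) / (d * t ^ 2)) := by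
  have hrow (k : Fin V) : Function.Injective fun j : Fin d => (Sum.inl (k, j) : _ ⊕ Fin d) :=
    fun j j' h => by simpa using h
  have hA := meas_ge_abs_edot_div_le hd (he y) (he i)
    (hind.sumElim_precomp ((hrow y).sumElim (hrow i) fun j j' => by simp [hi.symm])) ht
  have hB := meas_ge_abs_edot_div_le hd hε (he i)
    (hind.sumElim_precomp (Sum.inr_injective.sumElim (hrow i) fun j j' => by simp)) ht
  have hC := meas_ge_abs_edot_self_div_sub_le hd (he y) (hind.precomp (hrow y)) ht
  have hD := meas_ge_abs_edot_div_le hd hε (he y)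
    (hind.sumElim_precomp (Sum.inr_injective.sumElim (hrow y) fun j j' => by simp)) ht
  have hsub : {ω | 5 * t ≤ |scoreGap β (e y ω) (ε ω) (e i ω) + v|}
      ⊆ {ω | t ≤ |edot (e y ω) (e i ω) / d|} ∪ {ω | t ≤ |edot (ε ω) (e i ω) / d|}
        ∪ {ω | t ≤ |edot (e y ω) (e y ω) / d - v|} ∪ {ω | t ≤ |edot (ε ω) (e y ω) / d|} := by
    intro ω hω
    by_contra h
    simp only [Set.mem_union, Set.mem_ofPred_eq, not_or, not_le] at h
    obtain ⟨⟨⟨hA, hB⟩, hC⟩, hD⟩ := h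
    exact not_lt.2 hω (abs_sqrt_mix_add_lt hβ0 hβ1 v.2 hβv hA hB hC hD)
  have hvar := variance_nonneg (fun x : ℝ => x ^ 2) (gaussianReal 0 v)
  calc _ ≤ _ := measure_mono hsub
    _ ≤ _ := by grw [measure_union_le, measure_union_le, measure_union_le, hA, hB, hC, hD]
    _ = _ := by
        rw [← ENNReal.ofReal_add (by positivity) (by positivity),
          ← ENNReal.ofReal_add (by positivity) (by positivity),
          ← ENNReal.ofReal_add (by positivity) (by positivity)]
        congr 1
        push_cast
        ring

theorem g_tendsto_neg_sq_in_probability_general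
    (σe : ℝ) (hσe : 0 < σe) (V : ℕ) (y i : Fin V) (hi : i ≠ y)
    (η δ : ℝ) (hη : 0 < η) (hδ : 0 < δ) :
    ∃ βb₀ : ℝ, 0 < βb₀ ∧ ∃ d₀ : ℕ,
      ∀ (βb : ℝ), 0 < βb → βb < βb₀ → βb < 1 →
      ∀ (d : ℕ), d₀ ≤ d →
      ∀ (Ω : Type) (_ : MeasurableSpace Ω) (P : Measure Ω), IsProbabilityMeasure P →
      ∀ (e : Fin V → Ω → Fin d → ℝ) (ε : Ω → Fin d → ℝ),
        (∀ k j, Measurable fun ω => e k ω j) →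
        (∀ j, Measurable fun ω => ε ω j) →
        (∀ k j, P.map (fun ω => e k ω j) = gaussianReal 0 (Real.toNNReal (σe ^ 2))) →
        (∀ j, P.map (fun ω => ε ω j) = gaussianReal 0 1) →
        iIndepFun
          (Sum.elim (fun (p : Fin V × Fin d) (ω : Ω) => e p.1 ω p.2)
            (fun (j : Fin d) (ω : Ω) => ε ω j)) P →
        ENNReal.ofReal (1 - δ) <
          P {ω | |(Real.sqrt (1 - βb) * (edot (e y ω) (e i ω) / d)
              + Real.sqrt βb * (edot (ε ω) (e i ω) / d)
              - Real.sqrt (1 - βb) * (edot (e y ω) (e y ω) / d)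
              - Real.sqrt βb * (edot (ε ω) (e y ω) / d)) + σe ^ 2| < η} := by
  set v := (σe ^ 2).toNNReal
  have hv : (v : ℝ) = σe ^ 2 := Real.coe_toNNReal _ (sq_nonneg σe)
  set K : ℝ := v ^ 2 + 2 * v + Var[fun x => x ^ 2; gaussianReal 0 v]
  obtain ⟨d₀, hd₀⟩ := Filter.eventually_atTop.1 <| (Filter.eventually_gt_atTop 0).and <|
    (tendsto_const_div_atTop_nhds_zero_nat (K / (η / 5) ^ 2)).eventually
      (gt_mem_nhds (lt_min hδ one_pos))
  refine ⟨η / 5 / σe ^ 2, by positivity, d₀, fun βb hβ0 hβb₀ hβ1 d hd Ω _ P _ e ε he_meas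
    hε_meas he_map hε_map hind => ?_⟩
  obtain ⟨hd_pos, hK⟩ := hd₀ d hd
  have hβv : βb * v ≤ η / 5 := by
    rw [hv]
    exact ((lt_div_iff₀ (by positivity)).1 hβb₀).le
  have hbad := meas_ge_abs_scoreGap_add_le hd_pos (fun k j => ⟨(he_meas k j).aemeasurable,
    he_map k j⟩) (fun j => ⟨(hε_meas j).aemeasurable, hε_map j⟩) hind hi hβ0.le hβ1.le hβv
    (by positivity)
  rw [mul_div_cancel₀ η (by norm_num)] at hbad
  refine ofReal_one_sub_lt_of_measure_compl_lt ?_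
  simp only [Set.compl_ofPred, not_lt]
  rw [← hv]
  refine hbad.trans_lt ((ENNReal.ofReal_lt_ofReal_iff (lt_min hδ one_pos)).2 ?_)
  rwa [div_div, mul_comm] at hK

/-- **Limit of `g(z₀, ε, e_i, z₀)`** in the proof of Lemma 1: for every token index `i ≠ y`,
the quantity
`g = √(1−β̄)·(⟪z₀, e_i⟫/d) + √β̄·(⟪ε, e_i⟫/d) − √(1−β̄)·(⟪z₀, z₀⟫/d) − √β̄·(⟪ε, z₀⟫/d)`
(with `z₀ = e_y`) converges in probability to `−σ_e²` in the joint limit `β̄ → 0`, `d → ∞`. -/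
theorem g_tendsto_neg_sq_in_probability
    (σe : ℝ) (hσe : 0 < σe) (V : ℕ) (hV : 2 ≤ V) (y i : Fin V) (hi : i ≠ y)
    (η δ : ℝ) (hη : 0 < η) (hδ : 0 < δ) :
    ∃ βb₀ : ℝ, 0 < βb₀ ∧ ∃ d₀ : ℕ,
      ∀ (βb : ℝ), 0 < βb → βb < βb₀ → βb < 1 →
      ∀ (d : ℕ), d₀ ≤ d →
      ∀ (Ω : Type) (_ : MeasurableSpace Ω) (P : Measure Ω), IsProbabilityMeasure P →
      ∀ (e : Fin V → Ω → Fin d → ℝ) (ε : Ω → Fin d → ℝ),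
        (∀ k j, Measurable fun ω => e k ω j) →
        (∀ j, Measurable fun ω => ε ω j) →
        (∀ k j, P.map (fun ω => e k ω j) = gaussianReal 0 (Real.toNNReal (σe ^ 2))) →
        (∀ j, P.map (fun ω => ε ω j) = gaussianReal 0 1) →
        iIndepFun
          (Sum.elim (fun (p : Fin V × Fin d) (ω : Ω) => e p.1 ω p.2)
            (fun (j : Fin d) (ω : Ω) => ε ω j)) P →
        ENNReal.ofReal (1 - δ) <
          P {ω | |(Real.sqrt (1 - βb) * (edot (e y ω) (e i ω) / d)
              + Real.sqrt βb * (edot (ε ω) (e i ω) / d)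
              - Real.sqrt (1 - βb) * (edot (e y ω) (e y ω) / d)
              - Real.sqrt βb * (edot (ε ω) (e y ω) / d)) + σe ^ 2| < η} :=
  g_tendsto_neg_sq_in_probability_general σe hσe V y i hi η δ hη hδ
end

section
/- Self cross-entropy of a Gaussian embedding vanishes in probability as the dimension grows: fix σ_e > 0, V ≥ 2 and y ∈ {1,…,V}; for each d ∈ ℕ let e₁,…,e_V be independent random vectors in ℝ^d with i.i.d. N(0, σ_e²) coordinates. Then log( 1 + Σ_{i ≠ y} exp( ⟪e_y, e_i⟫ − ⟪e_y, e_y⟫ ) ) converges in probability to 0 as d → ∞; equivalently, −log of the softmax probability assigned to token y at its own embedding, with logits ⟪e_y, e_j⟫, tends to 0 in probability. -/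
open MeasureTheory ProbabilityTheory Finset

/-!
Write `⟪e_y, e_i⟫ - ⟪e_y, e_y⟫ = ∑_j Z_j` with `Z_j = e_{y,j} e_{i,j} - e_{y,j}²`. For `i ≠ y`
the `Z_j` are pairwise independent with mean `-E[g²] < 0` and variance `E[g⁴]` (`g` a coordinate),
so Chebyshev gives `P(t < ∑_j Z_j) ≤ d E[g⁴] / (t + d E[g²])² → 0` for every fixed `t`.
If the logarithm exceeds `η`, some `exp(⟪e_y, e_i⟫ - ⟪e_y, e_y⟫)` exceeds `(e^η - 1) / (V - 1)`,
and a union bound over `i ≠ y` concludes.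
-/

open Filter Topology

lemma exists_log_div_card_lt_of_lt_log_one_add_sum_exp {ι : Type*} {s : Finset ι} {X : ι → ℝ}
    {η : ℝ} (hη : 0 < η) (h : η < |Real.log (1 + ∑ i ∈ s, Real.exp (X i))|) :
    ∃ i ∈ s, Real.log ((Real.exp η - 1) / #s) < X i := by
  have hS : 0 ≤ ∑ i ∈ s, Real.exp (X i) := sum_nonneg fun i _ => (Real.exp_pos _).le
  rw [abs_of_nonneg (Real.log_nonneg (by linarith)), Real.lt_log_iff_exp_lt (by linarith)] at h
  have hc : 0 < Real.exp η - 1 := by linarith [Real.add_one_lt_exp hη.ne']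
  have hlt : ∑ _i ∈ s, (Real.exp η - 1) / #s < ∑ i ∈ s, Real.exp (X i) := by
    rw [sum_const, nsmul_eq_mul]
    calc (#s : ℝ) * ((Real.exp η - 1) / #s) ≤ Real.exp η - 1 := by
          rcases (Nat.cast_nonneg #s : (0 : ℝ) ≤ #s).eq_or_lt with h0 | h0
          · rw [← h0, zero_mul]; exact hc.le
          · rw [mul_div_cancel₀ _ h0.ne']
      _ < _ := by linarith
  obtain ⟨i, hi, hlt⟩ := exists_lt_of_sum_lt hlt
  have hpos : (0 : ℝ) < #s := Nat.cast_pos.mpr (card_pos.mpr ⟨i, hi⟩)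
  exact ⟨i, hi, (Real.log_lt_iff_lt_exp (by positivity)).mpr hlt⟩

lemma tendsto_natCast_mul_div_add_natCast_mul_sq {m : ℝ} (hm : m ≠ 0) (σ2 t : ℝ) :
    Tendsto (fun d : ℕ => d * σ2 / (t + d * m) ^ 2) atTop (𝓝 0) := by
  have h : Tendsto (fun d : ℕ => σ2 * (d : ℝ)⁻¹ / (t * (d : ℝ)⁻¹ + m) ^ 2) atTop
      (𝓝 (σ2 * 0 / (t * 0 + m) ^ 2)) :=
    ((tendsto_inv_atTop_nhds_zero_nat.const_mul σ2).div
      (((tendsto_inv_atTop_nhds_zero_nat.const_mul t).add_const m).pow 2) (by simpa))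
  rw [mul_zero, zero_div] at h
  refine h.congr' ?_
  filter_upwards [eventually_ne_atTop 0] with d hd
  have hd : (d : ℝ) ≠ 0 := Nat.cast_ne_zero.mpr hd
  field_simp

lemma ProbabilityTheory.iIndepFun.indepFun_comp_pair_of_ne {Ω ι κ β γ : Type*}
    [MeasurableSpace Ω] {P : Measure Ω} [MeasurableSpace β] [MeasurableSpace γ]
    {X : ι × κ → Ω → β} (h : iIndepFun X P) (hX : ∀ p, Measurable (X p)) {φ : β × β → γ}
    (hφ : Measurable φ) (a b : ι) {j k : κ} (hjk : j ≠ k) :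
    (fun ω => φ (X (a, j) ω, X (b, j) ω)) ⟂ᵢ[P] (fun ω => φ (X (a, k) ω, X (b, k) ω)) :=
  (h.indepFun_prodMk_prodMk hX (a, j) (b, j) (a, k) (b, k) (by simp [hjk]) (by simp [hjk])
    (by simp [hjk]) (by simp [hjk])).comp hφ hφ

section
variable {Ω : Type*} [MeasurableSpace Ω] {P : Measure Ω} {A B : Ω → ℝ}

lemma integral_pow_eq_of_map_eq {μ : Measure ℝ} (hA : AEMeasurable A P) (hAμ : P.map A = μ)
    (n : ℕ) : ∫ ω, A ω ^ n ∂P = ∫ x, x ^ n ∂μ := by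
  subst hAμ
  exact (integral_map hA (measurable_id.pow_const n).aestronglyMeasurable).symm

lemma MeasureTheory.MemLp.integrable_pow_of_le [IsFiniteMeasure P] {p : ENNReal}
    (hA : MemLp A p P) {k : ℕ} (hk : k ≤ p) : Integrable (fun ω => A ω ^ k) P := by
  have h := (hA.mono_exponent hk).integrable_norm_pow'
  simp only [Real.norm_eq_abs, ← abs_pow] at h
  exact (integrable_norm_iff (hA.aestronglyMeasurable.pow k)).mp h

lemma MeasureTheory.MemLp.mul_sub_mul_self (hA : MemLp A 4 P) (hB : MemLp B 4 P) :
    MemLp (fun ω => A ω * B ω - A ω * A ω) 2 P := by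
  have : ENNReal.HolderTriple 4 4 2 := ⟨by
    rw [← two_mul, show (4 : ENNReal) = 2 * 2 by norm_num, ENNReal.mul_inv (by simp) (by simp),
      ← mul_assoc, ENNReal.mul_inv_cancel (by simp) (by simp), one_mul]⟩
  exact (hB.mul' hA).sub (hA.mul' hA)

variable [IsProbabilityMeasure P]

lemma measure_lt_sum_le_of_integral_eq_neg {ι : Type*} [Fintype ι] {Z : ι → Ω → ℝ}
    {m σ2 t : ℝ} (hZ : ∀ i, MemLp (Z i) 2 P) (hindep : Pairwise fun i j => Z i ⟂ᵢ[P] Z j)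
    (hmean : ∀ i, P[Z i] = -m) (hvar : ∀ i, Var[Z i; P] = σ2)
    (ht : 0 < t + Fintype.card ι * m) :
    P {ω | t < ∑ i, Z i ω} ≤
      ENNReal.ofReal (Fintype.card ι * σ2 / (t + Fintype.card ι * m) ^ 2) := by
  have hsum_mean : P[∑ i, Z i] = -(Fintype.card ι * m) := by
    simp_rw [Finset.sum_apply]
    rw [integral_finsetSum _ fun i _ => (hZ i).integrable one_le_two]
    simp [hmean]
  have hsum_var : Var[∑ i, Z i; P] = Fintype.card ι * σ2 := by
    rw [IndepFun.variance_sum (fun i _ => hZ i) fun i _ j _ hij => hindep hij]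
    simp [hvar]
  calc P {ω | t < ∑ i, Z i ω}
      ≤ P {ω | t + Fintype.card ι * m ≤ |(∑ i, Z i) ω - P[∑ i, Z i]|} := by
        refine measure_mono fun ω hω => ?_
        rw [Set.mem_ofPred_eq] at hω
        rw [Set.mem_ofPred_eq, hsum_mean, Finset.sum_apply]
        exact le_abs.mpr (Or.inl (by linarith))
    _ ≤ _ := by
        rw [← hsum_var]
        exact meas_ge_le_variance_div_sq (memLp_finsetSum' _ fun i _ => hZ i) ht

lemma integral_mul_sub_mul_self (hAB : A ⟂ᵢ[P] B) (hA : MemLp A 2 P) (hB : Integrable B P)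
    (hB0 : P[B] = 0) : P[fun ω => A ω * B ω - A ω * A ω] = -P[fun ω => A ω ^ 2] := by
  have hAB0 : P[fun ω => A ω * B ω] = 0 := by
    rw [hAB.integral_fun_mul_eq_mul_integral hA.aestronglyMeasurable hB.aestronglyMeasurable,
      hB0, mul_zero]
  simp_rw [← sq]
  rw [integral_sub (f := fun ω => A ω * B ω) (hAB.integrable_mul (hA.integrable one_le_two) hB)
    hA.integrable_sq, hAB0, zero_sub]

lemma integral_mul_sub_mul_self_sq (hAB : A ⟂ᵢ[P] B) (hA : MemLp A 4 P) (hB : MemLp B 2 P)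
    (hB0 : P[B] = 0) (hB2 : P[fun ω => B ω ^ 2] = P[fun ω => A ω ^ 2]) :
    P[fun ω => (A ω * B ω - A ω * A ω) ^ 2] =
      P[fun ω => A ω ^ 2] ^ 2 + P[fun ω => A ω ^ 4] := by
  have hA2 : Integrable (fun ω => A ω ^ 2) P := hA.integrable_pow_of_le (by norm_num)
  have hA3 : Integrable (fun ω => A ω ^ 3) P := hA.integrable_pow_of_le (by norm_num)
  have hA2B2 : (fun ω => A ω ^ 2) ⟂ᵢ[P] (fun ω => B ω ^ 2) :=
    hAB.comp (measurable_id.pow_const 2) (measurable_id.pow_const 2)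
  have hA3B : (fun ω => A ω ^ 3) ⟂ᵢ[P] B := hAB.comp (measurable_id.pow_const 3) measurable_id
  have hA2B2_int : Integrable (fun ω => A ω ^ 2 * B ω ^ 2) P :=
    hA2B2.integrable_mul hA2 hB.integrable_sq
  have hA3B_int : Integrable (fun ω => 2 * (A ω ^ 3 * B ω)) P :=
    (hA3B.integrable_mul hA3 (hB.integrable one_le_two)).const_mul 2
  have hsq : ∀ ω, (A ω * B ω - A ω * A ω) ^ 2 =
      A ω ^ 2 * B ω ^ 2 - 2 * (A ω ^ 3 * B ω) + A ω ^ 4 := fun ω => by ring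
  simp_rw [hsq]
  rw [integral_add (f := fun ω => A ω ^ 2 * B ω ^ 2 - 2 * (A ω ^ 3 * B ω)) (hA2B2_int.sub hA3B_int)
      (hA.integrable_pow_of_le (by norm_num)),
    integral_sub (f := fun ω => A ω ^ 2 * B ω ^ 2) hA2B2_int hA3B_int,
    integral_const_mul,
    hA2B2.integral_fun_mul_eq_mul_integral hA2.aestronglyMeasurable
      hB.integrable_sq.aestronglyMeasurable,
    hA3B.integral_fun_mul_eq_mul_integral hA3.aestronglyMeasurable hB.aestronglyMeasurable,
    hB0, hB2]
  ring

lemma variance_mul_sub_mul_self (hAB : A ⟂ᵢ[P] B) (hA : MemLp A 4 P) (hB : MemLp B 4 P)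
    (hB0 : P[B] = 0) (hB2 : P[fun ω => B ω ^ 2] = P[fun ω => A ω ^ 2]) :
    Var[fun ω => A ω * B ω - A ω * A ω; P] = P[fun ω => A ω ^ 4] := by
  have hB2' : MemLp B 2 P := hB.mono_exponent (by norm_num)
  rw [variance_eq_sub (hA.mul_sub_mul_self hB)]
  simp only [Pi.pow_apply]
  rw [integral_mul_sub_mul_self_sq hAB hA hB2' hB0 hB2, integral_mul_sub_mul_self hAB
    (hA.mono_exponent (by norm_num)) (hB2'.integrable one_le_two) hB0]
  ring
end

theorem tendsto_measure_lt_sum_of_integral_eq_neg {Ω : ℕ → Type*}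
    [∀ d, MeasurableSpace (Ω d)] {P : ∀ d, Measure (Ω d)} [∀ d, IsProbabilityMeasure (P d)]
    {Z : ∀ d, Fin d → Ω d → ℝ} {m σ2 : ℝ} (hm : 0 < m) (hZ : ∀ d j, MemLp (Z d j) 2 (P d))
    (hindep : ∀ d, Pairwise fun j k => Z d j ⟂ᵢ[P d] Z d k)
    (hmean : ∀ d j, (P d)[Z d j] = -m) (hvar : ∀ d j, Var[Z d j; P d] = σ2) (t : ℝ) :
    Tendsto (fun d => P d {ω | t < ∑ j, Z d j ω}) atTop (𝓝 0) := by
  have hpos : ∀ᶠ d : ℕ in atTop, 0 < t + d * m :=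
    (tendsto_atTop_add_const_left _ t
      (tendsto_natCast_atTop_atTop.atTop_mul_const hm)).eventually_gt_atTop 0
  have hbound := ENNReal.tendsto_ofReal (tendsto_natCast_mul_div_add_natCast_mul_sq hm.ne' σ2 t)
  rw [ENNReal.ofReal_zero] at hbound
  refine tendsto_of_tendsto_of_tendsto_of_le_of_le' tendsto_const_nhds hbound
    (Eventually.of_forall fun _ => zero_le) ?_
  filter_upwards [hpos] with d hd
  simpa using measure_lt_sum_le_of_integral_eq_neg (hZ d) (hindep d) (hmean d) (hvar d)
    (by simpa using hd)

theorem tendsto_measure_lt_edot_sub_edot_self {ι : Type*} {Ω : ℕ → Type*}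
    [∀ d, MeasurableSpace (Ω d)] {P : ∀ d, Measure (Ω d)} [∀ d, IsProbabilityMeasure (P d)]
    {μ : Measure ℝ} {e : ∀ d, ι → Ω d → Fin d → ℝ}
    (he_meas : ∀ d k j, Measurable fun ω => e d k ω j)
    (he_law : ∀ d k j, (P d).map (fun ω => e d k ω j) = μ)
    (he_indep : ∀ d, iIndepFun (fun (p : ι × Fin d) ω => e d p.1 ω p.2) (P d))
    (hμ4 : MemLp id 4 μ) (hμ0 : ∫ x, x ∂μ = 0) (hμ2 : 0 < ∫ x, x ^ 2 ∂μ)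
    {y i : ι} (hiy : i ≠ y) (t : ℝ) :
    Tendsto (fun d => P d {ω | t < edot (e d y ω) (e d i ω) - edot (e d y ω) (e d y ω)})
      atTop (𝓝 0) := by
  have hmoment : ∀ d k j n, ∫ ω, e d k ω j ^ n ∂P d = ∫ x, x ^ n ∂μ := fun d k j =>
    integral_pow_eq_of_map_eq (he_meas d k j).aemeasurable (he_law d k j)
  have hmemLp : ∀ d k j, MemLp (fun ω => e d k ω j) 4 (P d) := fun d k j => by
    rw [← he_law d k j] at hμ4
    exact (memLp_map_measure_iff hμ4.aestronglyMeasurable (he_meas d k j).aemeasurable).mp hμ4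
  have hmean0 : ∀ d k j, ∫ ω, e d k ω j ∂P d = 0 := fun d k j => by
    simpa [hμ0] using hmoment d k j 1
  have hsq_eq : ∀ d j, ∫ ω, e d i ω j ^ 2 ∂P d = ∫ ω, e d y ω j ^ 2 ∂P d := fun d j => by
    rw [hmoment, hmoment]
  have hindep_pair : ∀ d j, (fun ω => e d y ω j) ⟂ᵢ[P d] (fun ω => e d i ω j) :=
    fun d j => (he_indep d).indepFun (show ((y, j) : ι × Fin d) ≠ (i, j) by simp [hiy.symm])
  refine (tendsto_measure_lt_sum_of_integral_eq_neg hμ2 (σ2 := ∫ x, x ^ 4 ∂μ)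
    (Z := fun d j ω => e d y ω j * e d i ω j - e d y ω j * e d y ω j)
    (fun d j => (hmemLp d y j).mul_sub_mul_self (hmemLp d i j))
    (fun d j k hjk => (he_indep d).indepFun_comp_pair_of_ne (fun p => he_meas d p.1 p.2)
      (φ := fun p : ℝ × ℝ => p.1 * p.2 - p.1 * p.1) (by fun_prop) y i hjk)
    (fun d j => ?_) (fun d j => ?_) t).congr fun d => ?_
  · rw [integral_mul_sub_mul_self (hindep_pair d j) ((hmemLp d y j).mono_exponent (by norm_num))
      ((hmemLp d i j).integrable (by norm_num)) (hmean0 d i j), hmoment]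
  · rw [variance_mul_sub_mul_self (hindep_pair d j) (hmemLp d y j) (hmemLp d i j) (hmean0 d i j)
      (hsq_eq d j), hmoment]
  · simp only [edot, ← sum_sub_distrib]

theorem self_cross_entropy_tendsto_zero_in_probability_general
    (σe : ℝ) (hσe : 0 < σe) (V : ℕ) (y : Fin V)
    (Ω : ℕ → Type) (mΩ : ∀ d, MeasurableSpace (Ω d)) (P : ∀ d, Measure (Ω d))
    (hP : ∀ d, IsProbabilityMeasure (P d))
    (e : ∀ d : ℕ, Fin V → Ω d → Fin d → ℝ)
    (he_meas : ∀ d k j, Measurable fun ω => e d k ω j)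
    (he_law : ∀ d k j, (P d).map (fun ω => e d k ω j) = gaussianReal 0 (Real.toNNReal (σe ^ 2)))
    (he_indep : ∀ d, iIndepFun (m := fun _ => Real.measurableSpace)
      (fun (p : Fin V × Fin d) (ω : Ω d) => e d p.1 ω p.2) (P d)) :
    ∀ η : ℝ, 0 < η →
      Filter.Tendsto
        (fun d : ℕ =>
          P d {ω | η < |Real.log (1 + ∑ i ∈ Finset.univ.erase y,
              Real.exp (edot (e d y ω) (e d i ω) - edot (e d y ω) (e d y ω)))|})
        Filter.atTop (nhds 0) := by
  intro η hη
  set t := Real.log ((Real.exp η - 1) / #(univ.erase y))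
  have hμ2 : 0 < ∫ x, x ^ 2 ∂gaussianReal 0 (σe ^ 2).toNNReal := by
    rw [← variance_of_integral_eq_zero (X := fun x => x) aemeasurable_id integral_id_gaussianReal,
      variance_fun_id_gaussianReal]
    simpa using hσe.ne'
  have htail : ∀ i ∈ univ.erase y, Tendsto (fun d => P d
      {ω | t < edot (e d y ω) (e d i ω) - edot (e d y ω) (e d y ω)}) atTop (𝓝 0) :=
    fun i hi => tendsto_measure_lt_edot_sub_edot_self he_meas he_law he_indep
      (memLp_id_gaussianReal 4) integral_id_gaussianReal hμ2 (ne_of_mem_erase hi) t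
  refine tendsto_of_tendsto_of_tendsto_of_le_of_le tendsto_const_nhds
    (by simpa using tendsto_finsetSum _ htail) (fun _ => zero_le) fun d => ?_
  calc P d {ω | η < |Real.log (1 + ∑ i ∈ univ.erase y,
          Real.exp (edot (e d y ω) (e d i ω) - edot (e d y ω) (e d y ω)))|}
      ≤ P d (⋃ i ∈ univ.erase y,
          {ω | t < edot (e d y ω) (e d i ω) - edot (e d y ω) (e d y ω)}) :=
        measure_mono fun ω hω => by
          obtain ⟨i, hi, hlt⟩ := exists_log_div_card_lt_of_lt_log_one_add_sum_exp hη hω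
          exact Set.mem_biUnion hi hlt
    _ ≤ _ := measure_biUnion_finset_le _ _

/-- **Self cross-entropy of a Gaussian embedding vanishes in probability** as the dimension
grows: with, for each `d`, embeddings `e₁,…,e_V` in `ℝ^d` that are independent with i.i.d.
`N(0, σ_e²)` coordinates, the quantity
`log(1 + Σ_{i ≠ y} exp(⟪e_y, e_i⟫ − ⟪e_y, e_y⟫))` — i.e. minus the log of the softmax
probability assigned to token `y` at its own embedding with logits `⟪e_y, e_j⟫` —
converges in probability to `0` as `d → ∞`. -/
theorem self_cross_entropy_tendsto_zero_in_probability
    (σe : ℝ) (hσe : 0 < σe) (V : ℕ) (hV : 2 ≤ V) (y : Fin V)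
    (Ω : ℕ → Type) (mΩ : ∀ d, MeasurableSpace (Ω d)) (P : ∀ d, Measure (Ω d))
    (hP : ∀ d, IsProbabilityMeasure (P d))
    (e : ∀ d : ℕ, Fin V → Ω d → Fin d → ℝ)
    (he_meas : ∀ d k j, Measurable fun ω => e d k ω j)
    (he_law : ∀ d k j, (P d).map (fun ω => e d k ω j) = gaussianReal 0 (Real.toNNReal (σe ^ 2)))
    (he_indep : ∀ d, iIndepFun (m := fun _ => Real.measurableSpace)
      (fun (p : Fin V × Fin d) (ω : Ω d) => e d p.1 ω p.2) (P d)) :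
    ∀ η : ℝ, 0 < η →
      Filter.Tendsto
        (fun d : ℕ =>
          P d {ω | η < |Real.log (1 + ∑ i ∈ Finset.univ.erase y,
              Real.exp (edot (e d y ω) (e d i ω) - edot (e d y ω) (e d y ω)))|})
        Filter.atTop (nhds 0) :=
  self_cross_entropy_tendsto_zero_in_probability_general σe hσe V y Ω mΩ P hP e he_meas he_law
    he_indep
end
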